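/- If every line in ℝ^d strongly intersecting [0,1]^d meets a set K ⊆ ℝ^d, then for every hyperplane H ⊆ ℝ^d, the orthogonal projection of K onto H has nonempty interior in H. -/

import Mathlib

open Set Metric Module

/-- `L` is a line in `ℝ^d`. -/
def IsLine {d : ℕ} (L : Set (Fin d → ℝ)) : Prop :=
  ∃ p v : Fin d → ℝ, v ≠ 0 ∧ L = {x | ∃ c : ℝ, x = p + c • v}

/-- A line `L` strongly intersects an axis-parallel cube `C` if
`diam^∞(L ∩ C) ≥ diam^∞(C) / (2d)`.  (The metric on `Fin d → ℝ`
is the sup metric, so `Metric.diam` is exactly `diam^∞`.) -/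
def StronglyIntersects {d : ℕ} (L C : Set (Fin d → ℝ)) : Prop :=
  Metric.diam C / (2 * d) ≤ Metric.diam (L ∩ C)

/-- The unit cube `[0,1]^d`. -/
def unitCube (d : ℕ) : Set (Fin d → ℝ) := {x | ∀ i, x i ∈ Set.Icc (0 : ℝ) 1}

/-- The orthogonal projection (with respect to the Euclidean dot product)
of the set `K` onto the affine subspace `H`, viewed inside `H`. -/
def projIn {d : ℕ} (H : AffineSubspace ℝ (Fin d → ℝ)) (K : Set (Fin d → ℝ)) :
    Set H :=
  {p | ∃ x ∈ K, ∀ u ∈ H.direction, (∑ i, (x i - (p : Fin d → ℝ) i) * u i) = 0}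

/-! Take a normal `n` of `H` for the dot product, scaled to sup-norm one, and the point `p₀ ∈ H`
whose normal line passes through the centre of the cube. For `p ∈ H` with `dist p p₀ < 1/4`, the
line `p + ℝ n` passes within `1/4` of the centre, so it contains a chord of the cube of sup-length
`1/2 ≥ diam [0,1]^d / (2d)`. It therefore strongly intersects the cube and meets `K`, at a point
whose orthogonal projection onto `H` is `p`; the projection of `K` contains the ball around `p₀`. -/

theorem Submodule.exists_orthogonal_generator_of_finrank_add_one {E : Type*} [NormedAddCommGroup E]
    [InnerProductSpace ℝ E] [FiniteDimensional ℝ E] {V : Submodule ℝ E}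
    (hV : finrank ℝ V + 1 = finrank ℝ E) :
    ∃ n ∈ Vᗮ, n ≠ 0 ∧ ∀ x, ∃ t : ℝ, x - t • n ∈ V := by
  have hrank : finrank ℝ Vᗮ = 1 := by
    have := V.finrank_add_finrank_orthogonal
    omega
  obtain ⟨⟨n, hn⟩, hn0, hspan⟩ := finrank_eq_one_iff'.mp hrank
  refine ⟨n, hn, fun h ↦ hn0 (Subtype.ext h), fun x ↦ ?_⟩
  obtain ⟨y, hy, z, hz, rfl⟩ := V.exists_add_mem_mem_orthogonal x
  obtain ⟨t, ht⟩ := hspan ⟨z, hz⟩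
  refine ⟨t, ?_⟩
  rw [show t • n = z from congrArg Subtype.val ht, add_sub_cancel_right]
  exact hy

theorem Submodule.exists_dotProduct_normal {ι : Type*} [Fintype ι] {V : Submodule ℝ (ι → ℝ)}
    (hV : finrank ℝ V + 1 = Fintype.card ι) :
    ∃ n : ι → ℝ, ‖n‖ = 1 ∧ (∀ u ∈ V, n ⬝ᵥ u = 0) ∧ ∀ x, ∃ t : ℝ, x - t • n ∈ V := by
  let W : Submodule ℝ (EuclideanSpace ℝ ι) :=
    V.map (EuclideanSpace.equiv ι ℝ).symm.toLinearEquiv.toLinearMap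
  have hW : finrank ℝ W + 1 = finrank ℝ (EuclideanSpace ℝ ι) := by
    rw [LinearEquiv.finrank_map_eq, finrank_euclideanSpace, hV]
  obtain ⟨m, hm, hm0, hdecomp⟩ := W.exists_orthogonal_generator_of_finrank_add_one hW
  have hn0 : m.ofLp ≠ 0 := by simpa using hm0
  refine ⟨‖m.ofLp‖⁻¹ • m.ofLp, norm_smul_inv_norm hn0, fun u hu ↦ ?_, fun x ↦ ?_⟩
  · have : m.ofLp ⬝ᵥ u = 0 := by
      simpa [EuclideanSpace.inner_eq_star_dotProduct] using
        W.inner_right_of_mem_orthogonal (u := WithLp.toLp 2 u) (by simpa [W]) hm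
    rw [smul_dotProduct, this, smul_zero]
  · obtain ⟨t, ht⟩ := hdecomp (WithLp.toLp 2 x)
    refine ⟨t * ‖m.ofLp‖, ?_⟩
    rw [smul_smul, mul_assoc, mul_inv_cancel₀ (norm_ne_zero_iff.mpr hn0), mul_one]
    simpa [W, PiLp.coe_continuousLinearEquiv] using ht

theorem unitCube_eq_closedBall (d : ℕ) :
    unitCube d = closedBall (fun _ ↦ 1 / 2) (1 / 2) := by
  ext x
  simp only [unitCube, mem_ofPred_eq, mem_closedBall,
    dist_pi_le_iff (by norm_num : (0 : ℝ) ≤ 1 / 2), Real.dist_eq, abs_sub_le_iff, mem_Icc]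
  refine forall_congr' fun i ↦ ?_
  constructor <;> intro h <;> constructor <;> linarith [h.1, h.2]

theorem isBounded_unitCube (d : ℕ) : Bornology.IsBounded (unitCube d) := by
  rw [unitCube_eq_closedBall]
  exact isBounded_closedBall

theorem diam_unitCube_le_one (d : ℕ) : diam (unitCube d) ≤ 1 := by
  rw [unitCube_eq_closedBall]
  linarith [diam_closedBall (x := (fun _ ↦ 1 / 2 : Fin d → ℝ)) (by norm_num : (0 : ℝ) ≤ 1 / 2)]

theorem stronglyIntersects_unitCube {d : ℕ} (hd : 1 ≤ d) {p v : Fin d → ℝ} (hv : ‖v‖ = 1)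
    {t : ℝ} (ht : dist (p + t • v) (fun _ ↦ 1 / 2) ≤ 1 / 4) :
    StronglyIntersects {x | ∃ c : ℝ, x = p + c • v} (unitCube d) := by
  have hmem : ∀ s : ℝ, |s| ≤ 1 / 4 →
      p + (t + s) • v ∈ {x | ∃ c : ℝ, x = p + c • v} ∩ unitCube d := by
    intro s hs
    refine ⟨⟨t + s, rfl⟩, ?_⟩
    rw [unitCube_eq_closedBall, mem_closedBall]
    calc dist (p + (t + s) • v) (fun _ ↦ 1 / 2)
        ≤ dist (p + (t + s) • v) (p + t • v) + dist (p + t • v) (fun _ ↦ 1 / 2) :=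
          dist_triangle _ _ _
      _ ≤ 1 / 4 + 1 / 4 := by
          gcongr
          rw [dist_eq_norm, add_sub_add_left_eq_sub, ← sub_smul, add_sub_cancel_left, norm_smul,
            hv, mul_one, Real.norm_eq_abs]
          exact hs
      _ = 1 / 2 := by norm_num
  have hchord : 1 / 2 ≤ diam ({x | ∃ c : ℝ, x = p + c • v} ∩ unitCube d) := by
    have := dist_le_diam_of_mem ((isBounded_unitCube d).subset inter_subset_right)
      (hmem (1 / 4) (by norm_num [abs_of_pos])) (hmem (-(1 / 4)) (by norm_num [abs_of_pos]))
    rw [dist_eq_norm, add_sub_add_left_eq_sub, ← sub_smul, norm_smul, hv] at this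
    norm_num at this
    linarith
  have hd' : (1 : ℝ) ≤ d := by exact_mod_cast hd
  unfold StronglyIntersects
  calc diam (unitCube d) / (2 * d) ≤ 1 / 2 := by
        rw [div_le_iff₀ (by positivity)]; nlinarith [diam_unitCube_le_one d]
    _ ≤ _ := hchord

theorem mem_projIn_of_add_smul_mem {d : ℕ} {H : AffineSubspace ℝ (Fin d → ℝ)}
    {K : Set (Fin d → ℝ)} {n : Fin d → ℝ} (hn : ∀ u ∈ H.direction, n ⬝ᵥ u = 0) {p : H} {c : ℝ}
    (hc : (p : Fin d → ℝ) + c • n ∈ K) : p ∈ projIn H K := by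
  refine ⟨_, hc, fun u hu ↦ ?_⟩
  simp only [Pi.add_apply, Pi.smul_apply, smul_eq_mul, add_sub_cancel_left, mul_assoc,
    ← Finset.mul_sum]
  rw [← dotProduct, hn u hu, mul_zero]

/-- If every line strongly intersecting `[0,1]^d` meets `K`, then the orthogonal
projection of `K` onto any hyperplane `H` has nonempty interior in `H`. -/
theorem proj_interior_nonempty_of_strong_intersections {d : ℕ} (hd : 1 ≤ d)
    (K : Set (Fin d → ℝ))
    (hK : ∀ L : Set (Fin d → ℝ), IsLine L → StronglyIntersects L (unitCube d) →
      (L ∩ K).Nonempty)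
    (H : AffineSubspace ℝ (Fin d → ℝ)) (hne : (H : Set (Fin d → ℝ)).Nonempty)
    (hdim : finrank ℝ H.direction = d - 1) :
    (interior (projIn H K)).Nonempty := by
  obtain ⟨q, hq⟩ := hne
  obtain ⟨n, hn1, hnH, hdecomp⟩ :=
    H.direction.exists_dotProduct_normal (by rw [hdim, Fintype.card_fin]; omega)
  obtain ⟨t, ht⟩ := hdecomp ((fun _ ↦ 1 / 2) - q)
  let p₀ : H := ⟨_, AffineSubspace.vadd_mem_of_mem_direction ht hq⟩
  have hcenter : (p₀ : Fin d → ℝ) + t • n = fun _ ↦ 1 / 2 := by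
    simp only [p₀, vadd_eq_add]
    abel
  refine ⟨p₀, mem_interior.mpr
    ⟨ball p₀ (1 / 4), fun p hp ↦ ?_, isOpen_ball, mem_ball_self (by norm_num)⟩⟩
  have hline : StronglyIntersects {x | ∃ c : ℝ, x = (p : Fin d → ℝ) + c • n} (unitCube d) := by
    refine stronglyIntersects_unitCube hd hn1 (t := t) ?_
    rw [← hcenter, dist_add_right]
    exact (mem_ball.mp hp).le
  obtain ⟨x, ⟨c, rfl⟩, hx⟩ := hK _ ⟨p, n, by rintro rfl; simp at hn1, rfl⟩ hline
  exact mem_projIn_of_add_smul_mem hnH hx
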